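/- Let g : ℝ → [0,∞) be integrable, m1, m2 probability measures on ℝ, Φ1, Φ2 ≥ 0, λ = Φ1/(Φ1+Φ2) (with Φ2 > 0), and m = λ m1 + (1-λ) m2. Then S(Φ1+Φ2, m) - S(Φ1, m1) ≤ Φ2, where S(Φ, μ) = 1 - exp(-Φ - ∫g) - ∫ g(s) exp(-∫_s^∞ g(t)dt) exp(-Φ·μ([s,∞))) ds. -/

import Mathlib

/-! With `G s = ∫_{[s,∞)} g`, the function `exp (-G)` is monotone with a.e. derivative
`g * exp (-G)`, hence `∫ g * exp (-G) ≤ 1 - exp (-∫ g)`. Since `(Φ1 + Φ2) m = Φ1 m1 + Φ2 m2` and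
`m2 ≤ 1`, each factor `exp (-(Φ1 + Φ2) m[s,∞))` is at least `exp (-Φ2) * exp (-Φ1 m1[s,∞))`, so
both the boundary term and the integral lose at most the fraction `1 - exp (-Φ2)`. The total loss
is then at most `(1 - exp (-Φ2)) * (exp (-∫ g) + ∫ g * exp (-G)) ≤ 1 - exp (-Φ2) ≤ Φ2`. -/

open MeasureTheory Set Filter Real

/-- The pointwise integrand of the shaded sunlight functional: `Φ` is the projected
density, `m` the disintegration measure along the line, and `g` the density of the
shading measure along the line. -/
noncomputable def shadedSun (g : ℝ → ℝ) (Φ : ℝ) (m : Measure ℝ) : ℝ :=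
  1 - Real.exp (-(Φ + ∫ t, g t)) -
    ∫ s, g s * Real.exp (-(∫ t in Set.Ici s, g t)) *
      Real.exp (-(Φ * (m (Set.Ici s)).toReal))

theorem MeasureTheory.Integrable.mul_exp_neg {α : Type*} [MeasurableSpace α] {μ : Measure α}
    {f u : α → ℝ} (hf : Integrable f μ) (hu : AEMeasurable u μ) (hu0 : ∀ᵐ x ∂μ, 0 ≤ u x) :
    Integrable (fun x => f x * exp (-u x)) μ :=
  hf.mul_bdd (c := 1) hu.neg.exp.aestronglyMeasurable <| by
    filter_upwards [hu0] with x hx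
    rw [norm_of_nonneg (exp_pos _).le]
    exact exp_le_one_iff.2 (neg_nonpos.2 hx)

section TailIntegral

variable {g : ℝ → ℝ}

theorem antitone_integral_Ici (hg : Integrable g) (hg0 : 0 ≤ᵐ[volume] g) :
    Antitone fun s => ∫ t in Ici s, g t := fun _ _ hab =>
  setIntegral_mono_set hg.integrableOn (ae_restrict_of_ae hg0) (Ici_subset_Ici.2 hab).eventuallyLE

theorem ae_hasDerivAt_integral_Ici (hg : Integrable g) :
    ∀ᵐ s, HasDerivAt (fun s => ∫ t in Ici s, g t) (-g s) s := by
  filter_upwards [LocallyIntegrable.ae_hasDerivAt_integral hg.locallyIntegrable] with s hs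
  have hG : (fun s => ∫ t in Ici s, g t) = fun s => (∫ t in Ici 0, g t) - ∫ t in 0..s, g t := by
    ext s
    rw [← intervalIntegral.integral_Ici_sub_Ici' hg.integrableOn hg.integrableOn, sub_sub_cancel]
  rw [hG]
  exact (hs 0).const_sub _

theorem integrable_mul_exp_neg_integral_Ici (hg : Integrable g) (hg0 : 0 ≤ᵐ[volume] g) :
    Integrable fun s => g s * exp (-∫ t in Ici s, g t) :=
  hg.mul_exp_neg (antitone_integral_Ici hg hg0).measurable.aemeasurable
    (.of_forall fun _ => setIntegral_nonneg_of_ae_restrict (ae_restrict_of_ae hg0))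

theorem integral_mul_exp_neg_integral_Ici_le (hg : Integrable g) (hg0 : 0 ≤ᵐ[volume] g) :
    ∫ s, g s * exp (-∫ t in Ici s, g t) ≤ 1 - exp (-∫ t, g t) := by
  set F : ℝ → ℝ := fun s => exp (-∫ t in Ici s, g t)
  have hF : Monotone F := fun a b hab =>
    exp_le_exp.2 (neg_le_neg (antitone_integral_Ici hg hg0 hab))
  have hF' : ∀ᵐ s, deriv F s = g s * F s := by
    filter_upwards [ae_hasDerivAt_integral_Ici hg] with s hs
    have hFs : HasDerivAt F (exp (-∫ t in Ici s, g t) * -(-g s)) s := hs.neg.exp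
    rw [hFs.deriv, neg_neg, mul_comm]
  have hinterval : ∀ a b, a ≤ b → ∫ s in a..b, g s * F s ≤ 1 - exp (-∫ t, g t) := by
    intro a b hab
    rw [← intervalIntegral.integral_congr_ae (hF'.mono fun s hs _ => hs)]
    calc ∫ s in a..b, deriv F s ≤ F b - F a := by
          have h := (hF.monotoneOn _).intervalIntegral_deriv_mem_uIcc (a := a) (b := b)
          rw [uIcc_of_le (sub_nonneg.2 (hF hab))] at h
          exact h.2
      _ ≤ 1 - exp (-∫ t, g t) := by
          gcongr
          · exact exp_le_one_iff.2
              (neg_nonpos.2 (setIntegral_nonneg_of_ae_restrict (ae_restrict_of_ae hg0)))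
          · exact exp_le_exp.2 (neg_le_neg (setIntegral_le_integral hg hg0))
  exact le_of_tendsto (intervalIntegral_tendsto_integral
      (integrable_mul_exp_neg_integral_Ici hg hg0) tendsto_neg_atTop_atBot tendsto_id)
    ((eventually_ge_atTop 0).mono fun n hn => hinterval (-n) n (neg_le_self hn))

end TailIntegral

theorem exp_neg_sub_exp_neg_le {x y c : ℝ} (hx : 0 ≤ x) (hc : 0 ≤ c) (hy : y ≤ x + c) :
    exp (-x) - exp (-y) ≤ 1 - exp (-c) := by
  have hexp_y : exp (-x) * exp (-c) ≤ exp (-y) := by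
    rw [← exp_add]
    exact exp_le_exp.2 (by linarith)
  have hexp_x : exp (-x) ≤ 1 := exp_le_one_iff.2 (neg_nonpos.2 hx)
  have hexp_c : exp (-c) ≤ 1 := exp_le_one_iff.2 (neg_nonpos.2 hc)
  nlinarith

theorem shadedSun_sub_shadedSun_le {g : ℝ → ℝ} (hg : Integrable g) (hg0 : 0 ≤ᵐ[volume] g)
    {Φ Φ' c : ℝ} (hΦ : 0 ≤ Φ) (hΦ' : 0 ≤ Φ') (hc : 0 ≤ c) (hΦc : Φ' ≤ Φ + c)
    {m m' : Measure ℝ} (hm : ∀ s, Φ' * (m' (Ici s)).toReal ≤ Φ * (m (Ici s)).toReal + c) :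
    shadedSun g Φ' m' - shadedSun g Φ m ≤ 1 - exp (-c) := by
  set M := ∫ t, g t
  have hK := integrable_mul_exp_neg_integral_Ici hg hg0
  have hK0 : ∀ᵐ s, 0 ≤ g s * exp (-∫ t in Ici s, g t) := by
    filter_upwards [hg0] with s hs
    exact mul_nonneg hs (exp_pos _).le
  have hshaded : ∀ Ψ, 0 ≤ Ψ → ∀ μ : Measure ℝ, Integrable fun s =>
      g s * exp (-∫ t in Ici s, g t) * exp (-(Ψ * (μ (Ici s)).toReal)) := fun Ψ hΨ μ =>
    have hμ : Measurable fun s => (μ (Ici s)).toReal :=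
      (Antitone.measurable fun _ _ hab => measure_mono (Ici_subset_Ici.2 hab)).ennreal_toReal
    hK.mul_exp_neg (hμ.const_mul Ψ).aemeasurable
      (.of_forall fun s => mul_nonneg hΨ ENNReal.toReal_nonneg)
  have hintegral : (∫ s, g s * exp (-∫ t in Ici s, g t) * exp (-(Φ * (m (Ici s)).toReal))) -
      ∫ s, g s * exp (-∫ t in Ici s, g t) * exp (-(Φ' * (m' (Ici s)).toReal)) ≤
      (1 - exp (-c)) * ∫ s, g s * exp (-∫ t in Ici s, g t) := by
    rw [← integral_sub (hshaded Φ hΦ m) (hshaded Φ' hΦ' m'), ← integral_const_mul]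
    refine integral_mono_ae ((hshaded Φ hΦ m).sub (hshaded Φ' hΦ' m')) (hK.const_mul _) ?_
    filter_upwards [hK0] with s hs
    rw [← mul_sub, mul_comm]
    exact mul_le_mul_of_nonneg_right
      (exp_neg_sub_exp_neg_le (mul_nonneg hΦ ENNReal.toReal_nonneg) hc (hm s)) hs
  have hconst : exp (-(Φ + M)) - exp (-(Φ' + M)) ≤ (1 - exp (-c)) * exp (-M) := by
    rw [neg_add, neg_add, exp_add, exp_add, ← sub_mul]
    exact mul_le_mul_of_nonneg_right (exp_neg_sub_exp_neg_le hΦ hc hΦc) (exp_pos _).le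
  calc shadedSun g Φ' m' - shadedSun g Φ m
      = (exp (-(Φ + M)) - exp (-(Φ' + M))) +
        ((∫ s, g s * exp (-∫ t in Ici s, g t) * exp (-(Φ * (m (Ici s)).toReal))) -
          ∫ s, g s * exp (-∫ t in Ici s, g t) * exp (-(Φ' * (m' (Ici s)).toReal))) := by
        unfold shadedSun
        ring
    _ ≤ (1 - exp (-c)) * (exp (-M) + ∫ s, g s * exp (-∫ t in Ici s, g t)) := by
        rw [mul_add]
        exact add_le_add hconst hintegral
    _ ≤ 1 - exp (-c) := by
        refine mul_le_of_le_one_right (sub_nonneg.2 (exp_le_one_iff.2 (neg_nonpos.2 hc))) ?_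
        linarith [integral_mul_exp_neg_integral_Ici_le hg hg0]

theorem mul_toReal_mixture_apply {α : Type*} [MeasurableSpace α] {Φ₁ Φ₂ : ℝ} (hΦ₁ : 0 ≤ Φ₁)
    (hΦ₂ : 0 < Φ₂) (μ₁ μ₂ : Measure α) [IsFiniteMeasure μ₁] [IsFiniteMeasure μ₂] (s : Set α) :
    (Φ₁ + Φ₂) * ((ENNReal.ofReal (Φ₁ / (Φ₁ + Φ₂)) • μ₁ +
        ENNReal.ofReal (1 - Φ₁ / (Φ₁ + Φ₂)) • μ₂) s).toReal =
      Φ₁ * (μ₁ s).toReal + Φ₂ * (μ₂ s).toReal := by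
  have hratio : Φ₁ / (Φ₁ + Φ₂) ≤ 1 := (div_le_one (by linarith)).2 (by linarith)
  simp only [Measure.add_apply, Measure.smul_apply, smul_eq_mul]
  rw [ENNReal.toReal_add (by finiteness) (by finiteness), ENNReal.toReal_mul, ENNReal.toReal_mul,
    ENNReal.toReal_ofReal (by positivity), ENNReal.toReal_ofReal (sub_nonneg.2 hratio)]
  field_simp
  ring

/-- The key pointwise estimate: with `λ = Φ1/(Φ1+Φ2)` and `m = λ m1 + (1-λ) m2`,
`S(Φ1+Φ2, m) - S(Φ1, m1) ≤ Φ2`. -/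
theorem stmt_11 (g : ℝ → ℝ) (hg : Integrable g) (hg0 : ∀ s, 0 ≤ g s)
    (Φ1 Φ2 : ℝ) (hΦ1 : 0 ≤ Φ1) (hΦ2 : 0 < Φ2)
    (m1 m2 m : Measure ℝ) [IsProbabilityMeasure m1] [IsProbabilityMeasure m2]
    (hm : m = ENNReal.ofReal (Φ1 / (Φ1 + Φ2)) • m1 +
        ENNReal.ofReal (1 - Φ1 / (Φ1 + Φ2)) • m2) :
    shadedSun g (Φ1 + Φ2) m - shadedSun g Φ1 m1 ≤ Φ2 := by
  have hmix : ∀ s, (Φ1 + Φ2) * (m (Ici s)).toReal ≤ Φ1 * (m1 (Ici s)).toReal + Φ2 := by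
    intro s
    rw [hm, mul_toReal_mixture_apply hΦ1 hΦ2]
    have hm2 : (m2 (Ici s)).toReal ≤ 1 := measureReal_le_one
    nlinarith
  calc shadedSun g (Φ1 + Φ2) m - shadedSun g Φ1 m1 ≤ 1 - exp (-Φ2) :=
        shadedSun_sub_shadedSun_le hg (.of_forall hg0) hΦ1 (by linarith) hΦ2.le le_rfl hmix
    _ ≤ Φ2 := by linarith [add_one_le_exp (-Φ2)]
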